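/- The regular language b*ab* = { bⁱabʲ : i,j ≥ 0 } over {a,b} is not accepted by any quasi-deterministic all-final (qDF) sensing 5'→3' WK automaton. -/

import Mathlib

open Computability

/-- The two-letter alphabet `{a, b}`. -/
inductive Letter : Type
  | a : Letter
  | b : Letter
deriving DecidableEq

instance : Fintype Letter :=
  ⟨{Letter.a, Letter.b}, fun x => by cases x <;> simp⟩

open Letter

/-- A sensing 5'→3' Watson-Crick automaton over the alphabet `T` with state set `Q`:
an initial state `q0`, a set `F` of final states, and a transition mapping
`δ : Q × T* × T* → 2^Q` that is nonempty for only finitely many triples. -/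
structure WKAutomaton (T : Type) (Q : Type) where
  q0 : Q
  F : Set Q
  δ : Q → List T → List T → Set Q
  finite_delta : {t : Q × List T × List T | (δ t.1 t.2.1 t.2.2).Nonempty}.Finite

namespace WKAutomaton

variable {T Q : Type}

/-- One computation step on configurations:
`(q, x ++ w' ++ y) ⇒ (q', w')` iff `q' ∈ δ q x y`. -/
def Step (A : WKAutomaton T Q) (c c' : Q × List T) : Prop :=
  ∃ x y : List T, c.2 = x ++ c'.2 ++ y ∧ c'.1 ∈ A.δ c.1 x y

/-- The accepted language: words `w` with `(q₀, w) ⇒* (q_F, λ)` for some final `q_F`. -/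
def Lang (A : WKAutomaton T Q) : Set (List T) :=
  {w | ∃ qf ∈ A.F, Relation.ReflTransGen A.Step (A.q0, w) (qf, [])}

/-- `A` is deterministic: in every configuration at most one computation step
(choice of `x`, `y`, `w'`, `q'`) is applicable. -/
def Deterministic (A : WKAutomaton T Q) : Prop :=
  ∀ (q : Q) (w x₁ y₁ w₁ x₂ y₂ w₂ : List T) (q₁ q₂ : Q),
    w = x₁ ++ w₁ ++ y₁ → q₁ ∈ A.δ q x₁ y₁ →
    w = x₂ ++ w₂ ++ y₂ → q₂ ∈ A.δ q x₂ y₂ →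
    x₁ = x₂ ∧ y₁ = y₂ ∧ w₁ = w₂ ∧ q₁ = q₂

/-- `A` is quasi-deterministic: for every configuration `(q,w)`, whenever
`(q,w) ⇒ (p,u)` and `(q,w) ⇒ (r,v)`, it holds that `p = r`. -/
def QuasiDet (A : WKAutomaton T Q) : Prop :=
  ∀ (q : Q) (w : List T) (p r : Q) (u v : List T),
    A.Step (q, w) (p, u) → A.Step (q, w) (r, v) → p = r

/-- `A` is state-deterministic: for every state `q` there is at most one state `p`
with `p ∈ δ(q,u,v)` for some words `u`, `v`. -/
def StateDet (A : WKAutomaton T Q) : Prop :=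
  ∀ (q p₁ p₂ : Q) (u₁ v₁ u₂ v₂ : List T),
    p₁ ∈ A.δ q u₁ v₁ → p₂ ∈ A.δ q u₂ v₂ → p₁ = p₂

/-- `A` is stateless: `Q = F = {q₀}`. -/
def Stateless (A : WKAutomaton T Q) : Prop :=
  (∀ q : Q, q = A.q0) ∧ A.F = {A.q0}

/-- `A` is all-final: `Q = F`. -/
def AllFinal (A : WKAutomaton T Q) : Prop := A.F = Set.univ

/-- `A` is simple: at most one head reads in each step. -/
def Simple (A : WKAutomaton T Q) : Prop :=
  ∀ (q : Q) (u v : List T), (A.δ q u v).Nonempty → u = [] ∨ v = []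

/-- `A` is 1-limited: exactly one letter is read in each step. -/
def OneLimited (A : WKAutomaton T Q) : Prop :=
  ∀ (q : Q) (u v : List T), (A.δ q u v).Nonempty →
    (u = [] ∧ v.length = 1) ∨ (u.length = 1 ∧ v = [])

end WKAutomaton

/-- Equality of languages modulo the empty word. -/
def EqModLambda {T : Type} (L₁ L₂ : Set (List T)) : Prop :=
  ∀ w : List T, w ≠ [] → (w ∈ L₁ ↔ w ∈ L₂)

/-- `L` is accepted (modulo the empty word) by some sensing 5'→3' WK automaton
with a finite state set satisfying the property `P`. -/
def AcceptsWith (T : Type) (P : ∀ Q : Type, WKAutomaton T Q → Prop)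
    (L : Set (List T)) : Prop :=
  ∃ (Q : Type) (_ : Finite Q) (A : WKAutomaton T Q), P Q A ∧ EqModLambda A.Lang L

/-- The language `b*ab*`. -/
def Lbab : Set (List Letter) :=
  {w | ∃ i j : ℕ, w = List.replicate i b ++ a :: List.replicate j b}

/-!
In an all-final sensing 5'→3' WK automaton every computation can be stopped early, and what
has been read so far — a prefix together with a suffix of the input — is itself accepted.
If such an automaton accepted `b*ab*`, look at an accepting computation on `bᴷabᴷ`, where `K`
bounds the length of the words read in one transition. Before the step that reads the `a`, only
`b`s have been consumed, and that word is accepted, so it must be empty. Hence the `a` is read in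
the very first step, by a head that reads at most `K` letters: impossible.
-/

theorem Relation.ReflTransGen.exists_step_leaving {α : Type*} {r : α → α → Prop}
    {P : α → Prop} {a b : α} (h : ReflTransGen r a b) (ha : P a) (hb : ¬ P b) :
    ∃ c d, ReflTransGen r a c ∧ P c ∧ r c d ∧ ¬ P d := by
  induction h using Relation.ReflTransGen.head_induction_on with
  | refl => exact absurd ha hb
  | @head a a' hstep _ ih =>
    by_cases ha' : P a'
    · obtain ⟨c, d, hac, hc, hcd, hd⟩ := ih ha'
      exact ⟨c, d, .head hstep hac, hc, hcd, hd⟩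
    · exact ⟨a, a', .refl, ha, hstep, ha'⟩

theorem List.forall_mem_eq_of_prefix_replicate_append {α : Type*} {c : α} {K : ℕ}
    {z w : List α} (hz : z <+: replicate K c ++ w) (hlen : z.length ≤ K) : ∀ x ∈ z, x = c :=
  fun _ hx => eq_of_mem_replicate <|
    (prefix_of_prefix_length_le hz (prefix_append _ _) (by simpa using hlen)).subset hx

theorem List.forall_mem_eq_of_suffix_append_replicate {α : Type*} {c : α} {K : ℕ}
    {z w : List α} (hz : z <:+ w ++ replicate K c) (hlen : z.length ≤ K) : ∀ x ∈ z, x = c :=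
  fun x hx => forall_mem_eq_of_prefix_replicate_append (w := w.reverse)
    (by simpa using reverse_prefix.2 hz) (by simpa using hlen) x (mem_reverse.2 hx)

theorem List.mem_of_replicate_append_cons_replicate_eq {α : Type*} {c d : α} (hdc : d ≠ c)
    {K : ℕ} {x u y : List α} (h : replicate K c ++ d :: replicate K c = x ++ u ++ y)
    (hx : x.length ≤ K) (hy : y.length ≤ K) : d ∈ u := by
  have hxc : ∀ e ∈ x, e = c := forall_mem_eq_of_prefix_replicate_append
    (w := d :: replicate K c) (by rw [h, append_assoc]; exact prefix_append _ _) hx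
  have hyc : ∀ e ∈ y, e = c := forall_mem_eq_of_suffix_append_replicate
    (w := replicate K c ++ [d])
    (by rw [append_assoc, singleton_append, h]; exact suffix_append _ _) hy
  have hd : d ∈ x ++ u ++ y := by simp [← h]
  simp only [mem_append] at hd
  rcases hd with (hdx | hdu) | hdy
  · exact absurd (hxc d hdx) hdc
  · exact hdu
  · exact absurd (hyc d hdy) hdc

theorem count_a_of_mem_Lbab {w : List Letter} (hw : w ∈ Lbab) : w.count a = 1 := by
  obtain ⟨i, j, rfl⟩ := hw
  simp [List.count_replicate]

namespace WKAutomaton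

variable {T Q : Type}

theorem exists_bound_length_of_delta_nonempty (A : WKAutomaton T Q) :
    ∃ K, ∀ q x y, (A.δ q x y).Nonempty → x.length ≤ K ∧ y.length ≤ K := by
  obtain ⟨K, hK⟩ := (A.finite_delta.image fun t => max t.2.1.length t.2.2.length).bddAbove
  exact ⟨K, fun q x y h => max_le_iff.1 (hK ⟨(q, x, y), h, rfl⟩)⟩

theorem exists_frame_of_reflTransGen {A : WKAutomaton T Q} {q p : Q} {w u : List T}
    (h : Relation.ReflTransGen A.Step (q, w) (p, u)) :
    ∃ x y, w = x ++ u ++ y ∧ ∀ m, Relation.ReflTransGen A.Step (q, x ++ m ++ y) (p, m) := by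
  generalize hc : (p, u) = c at h
  induction h generalizing p u with
  | refl =>
    cases hc
    exact ⟨[], [], by simp, fun _ => by simpa using .refl⟩
  | @tail c d _ hcd ih =>
    subst hc
    obtain ⟨r, v⟩ := c
    obtain ⟨x, y, hw, hframe⟩ := ih rfl
    obtain ⟨x', y', hv, hδ⟩ := hcd
    dsimp only at hv hδ
    refine ⟨x ++ x', y' ++ y, by simp [hw, hv], fun m => ?_⟩
    have hstep : A.Step (r, x' ++ m ++ y') (p, m) := ⟨x', y', rfl, hδ⟩
    simpa using (hframe (x' ++ m ++ y')).tail hstep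

theorem AllFinal.mem_lang_of_reflTransGen {A : WKAutomaton T Q} (hA : A.AllFinal) {p : Q}
    {w : List T} (h : Relation.ReflTransGen A.Step (A.q0, w) (p, [])) : w ∈ A.Lang :=
  ⟨p, hA ▸ Set.mem_univ p, h⟩

theorem AllFinal.not_eqModLambda_Lbab {A : WKAutomaton Letter Q} (hA : A.AllFinal) :
    ¬ EqModLambda A.Lang Lbab := by
  intro hL
  obtain ⟨K, hK⟩ := A.exists_bound_length_of_delta_nonempty
  set w := List.replicate K b ++ a :: List.replicate K b
  have hw : w.count a = 1 := count_a_of_mem_Lbab ⟨K, K, rfl⟩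
  obtain ⟨qf, -, hacc⟩ := (hL w (by simp [w])).2 ⟨K, K, rfl⟩
  obtain ⟨⟨p, u⟩, ⟨p', u'⟩, hreach, hau, ⟨x', y', hu, hδ⟩, hau'⟩ :=
    hacc.exists_step_leaving (P := fun c => a ∈ c.2)
      (show a ∈ w from List.count_pos_iff.1 (by omega)) List.not_mem_nil
  obtain ⟨x, y, hxuy, hframe⟩ := exists_frame_of_reflTransGen hreach
  have hread_nil : x ++ y = [] := by
    by_contra hne
    have hxy : (x ++ y).count a = 1 :=
      count_a_of_mem_Lbab <| (hL _ hne).1 <| hA.mem_lang_of_reflTransGen (by simpa using hframe [])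
    have hu : 0 < u.count a := List.count_pos_iff.2 hau
    simp only [hxuy, List.count_append] at hw hxy
    omega
  obtain ⟨hx', hy'⟩ := hK p x' y' ⟨p', hδ⟩
  have hwu : w = x' ++ u' ++ y' := by simpa [List.append_eq_nil_iff.1 hread_nil, hxuy] using hu
  exact hau' (List.mem_of_replicate_append_cons_replicate_eq (by decide) hwu hx' hy')

end WKAutomaton

/-- The regular language `b*ab*` is not accepted by any quasi-deterministic
all-final (qDF) sensing 5'→3' WK automaton (modulo the empty word). -/
theorem bab_not_qDF :
    ¬ AcceptsWith Letter (fun _ A => A.QuasiDet ∧ A.AllFinal) Lbab := by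
  rintro ⟨Q, -, A, ⟨-, hA⟩, hL⟩
  exact hA.not_eqModLambda_Lbab hL
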